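/- For every fixed live-edge subgraph G_X (each node having at most one live in-neighbor) and every fixed sign labeling Y : E_X → {−1, 0, +1}, the deterministic positive spread is monotone as a set map: for all seed sets S ⊆ R ⊆ V, B^+(S) ⊆ B^+(R). -/
import Mathlib


/-- `anc parent v k` is the `k`-fold iterated live in-neighbor of `v` in a live-edge subgraph
in which every node has at most one incoming live edge; the subgraph is encoded by
`parent : V → Option V`, where `parent v = some u` means that the live edge `(u, v)` is
present. -/
def anc {V : Type*} (parent : V → Option V) (v : V) : ℕ → Option V
  | 0 => some v
  | k + 1 => (anc parent v k).bind parent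

/-- `v` is reachable from the seed set `S` in the live-edge subgraph, i.e. `v ∈ B(S)`. -/
def reaches {V : Type*} (parent : V → Option V) (S : Finset V) (v : V) : Prop :=
  ∃ k s, anc parent v k = some s ∧ s ∈ S

/-- The distance from `v` to its nearest seed ancestor along the chain of live in-neighbors. -/
noncomputable def seedDist {V : Type*} (parent : V → Option V) (S : Finset V) (v : V) : ℕ :=
  sInf {k | ∃ s, anc parent v k = some s ∧ s ∈ S}

/-- The sign label of the `j`-th edge on the unique live path into `v`, counted backwards
from `v` (so `j = 0` is the live edge into `v` itself).  `Y u` denotes the label of the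
unique live edge into `u` (and is irrelevant when `u` has no live in-edge). -/
def labelAt {V : Type*} (parent : V → Option V) (Y : V → SignType) (v : V) (j : ℕ) :
    SignType :=
  (anc parent v j).elim 0 Y

/-- `v ∈ B^+(S)`: `v` is reachable from `S`, and on the live path from its nearest seed
ancestor either every edge label is `0`, or the last edge with a nonzero label has label
`+1`. -/
def posNode {V : Type*} (parent : V → Option V) (Y : V → SignType) (S : Finset V)
    (v : V) : Prop :=
  reaches parent S v ∧
    ((∀ j < seedDist parent S v, labelAt parent Y v j = 0) ∨
      ∃ j < seedDist parent S v, labelAt parent Y v j = SignType.pos ∧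
        ∀ i < j, labelAt parent Y v i = 0)

/-- The set `B^+(S)` of positively activated nodes. -/
def Bpos {V : Type*} (parent : V → Option V) (Y : V → SignType) (S : Finset V) : Set V :=
  {v | posNode parent Y S v}

/-- for every fixed live-edge subgraph (each node having at most one live
in-neighbor) and every fixed sign labeling, the deterministic positive spread is monotone as
a set map: `S ⊆ R` implies `B^+(S) ⊆ B^+(R)`. -/
theorem Bpos_monotone {V : Type*} [Fintype V] [DecidableEq V]
    (parent : V → Option V) (Y : V → SignType)
    (S R : Finset V) (hSR : S ⊆ R) :
    Bpos parent Y S ⊆ Bpos parent Y R := by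
  intro v hv
  obtain ⟨hr, hpos⟩ := hv
  obtain ⟨k, s, hk, hs⟩ := hr
  have hrR : reaches parent R v := ⟨k, s, hk, hSR hs⟩
  have hdle : seedDist parent R v ≤ seedDist parent S v := by
    have hne : {k | ∃ s, anc parent v k = some s ∧ s ∈ S}.Nonempty := ⟨k, s, hk, hs⟩
    have hmem := Nat.sInf_mem hne
    obtain ⟨s', hs', hsS⟩ := hmem
    exact Nat.sInf_le ⟨s', hs', hSR hsS⟩
  refine ⟨hrR, ?_⟩
  rcases hpos with h0 | ⟨j, hj, hjp, hji⟩
  · exact Or.inl fun j hj => h0 j (lt_of_lt_of_le hj hdle)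
  · rcases lt_or_ge j (seedDist parent R v) with hlt | hge
    · exact Or.inr ⟨j, hlt, hjp, hji⟩
    · exact Or.inl fun i hi => hji i (lt_of_lt_of_le hi hge)
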